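/- Let ν be a Borel probability measure on [0,1] for which the L^q-spectrum τ(q) = lim_{r→0} log M_r^q(ν) / log r exists for all q > 0. Define s = sup{ t ≥ 0 : ∃ C > 0 such that ν(I) ≤ C|I|^t for all subintervals I ⊆ [0,1] }. Then s = inf{ t ≥ 0 : τ(q) < tq for all q > 0 }. -/

import Mathlib

open MeasureTheory Filter
open scoped ENNReal ENat Topology

/-- Smallest number of sets of diameter ≤ r needed to cover E. -/
noncomputable def coverNum {X : Type*} [PseudoMetricSpace X] (r : ℝ) (E : Set X) : ℕ∞ :=
  sInf {n : ℕ∞ | ∃ 𝒰 : Finset (Set X), (𝒰.card : ℕ∞) = n ∧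
    (∀ U ∈ 𝒰, Metric.diam U ≤ r) ∧ E ⊆ ⋃₀ ↑𝒰}

/-- Assouad dimension. -/
noncomputable def assouadDim {X : Type*} [PseudoMetricSpace X] (F : Set X) : ℝ :=
  sInf {d : ℝ | ∃ C : ℝ, 0 < C ∧ ∀ R r : ℝ, 0 < r → r < R → ∀ x ∈ F,
    (coverNum r (Metric.ball x R ∩ F) : ℝ≥0∞) ≤ ENNReal.ofReal (C * (R / r) ^ d)}

/-- (Upper) box-counting dimension. -/
noncomputable def boxDim {X : Type*} [PseudoMetricSpace X] (E : Set X) : ℝ :=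
  Filter.limsup (fun r : ℝ => Real.log ((coverNum r E).toNat : ℝ) / (-Real.log r)) (𝓝[>] 0)

/-- Frostman exponent w.r.t. subintervals of [0,1]. -/
noncomputable def frostmanExp01 (ν : Measure ℝ) : ℝ :=
  sSup {t : ℝ | 0 ≤ t ∧ ∃ C : ℝ, 0 < C ∧ ∀ a b : ℝ, 0 ≤ a → a ≤ b → b ≤ 1 →
    ν (Set.Icc a b) ≤ ENNReal.ofReal (C * (b - a) ^ t)}

/-- Frostman exponent w.r.t. all intervals of ℝ. -/
noncomputable def frostmanExp (ν : Measure ℝ) : ℝ :=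
  sSup {t : ℝ | 0 ≤ t ∧ ∃ C : ℝ, 0 < C ∧ ∀ a b : ℝ, a ≤ b →
    ν (Set.Icc a b) ≤ ENNReal.ofReal (C * (b - a) ^ t)}

/-- Topological support of a measure on ℝ. -/
noncomputable def mSupp (ν : Measure ℝ) : Set ℝ :=
  {x | ∀ r : ℝ, 0 < r → 0 < ν (Metric.ball x r)}

/-- The packing quantity M_r^q(ν): supremum of Σ ν(B(xᵢ,r))^q over finite
centered packings of supp ν by pairwise disjoint balls of radius r. -/
noncomputable def Mrq (ν : Measure ℝ) (q r : ℝ) : ℝ≥0∞ :=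
  sSup {v : ℝ≥0∞ | ∃ P : Finset ℝ, ↑P ⊆ mSupp ν ∧
    (↑P : Set ℝ).Pairwise (fun x y => Disjoint (Metric.ball x r) (Metric.ball y r)) ∧
    v = ∑ x ∈ P, ν (Metric.ball x r) ^ q}

/-- The closed unit square. -/
def unitSq : Set (ℝ × ℝ) := Set.Icc (0:ℝ) 1 ×ˢ Set.Icc (0:ℝ) 1

/-- Composition S_{i₁} ∘ ⋯ ∘ S_{i_k} for a finite word. -/
def itMap {m : ℕ} (S : Fin m → ℝ × ℝ → ℝ × ℝ) (w : List (Fin m)) : ℝ × ℝ → ℝ × ℝ :=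
  w.foldr (fun i f => S i ∘ f) id

/-- ν is the (rescaled) Bernoulli convolution with parameter b: the unique
probability measure on [0,1] satisfying the self-similarity relation
ν = ½ ν∘(b·)⁻¹ + ½ ν∘(b·+(1−b))⁻¹. -/
def IsBernoulliConv (b : ℝ) (ν : Measure ℝ) : Prop :=
  IsProbabilityMeasure ν ∧ ν (Set.Icc (0:ℝ) 1)ᶜ = 0 ∧
    ν = (1/2 : ℝ≥0∞) • ν.map (fun x => b * x) + (1/2 : ℝ≥0∞) • ν.map (fun x => b * x + (1 - b))

/-!
A Frostman bound `ν [a, b] ≤ C (b - a) ^ t` bounds every `r`-ball centred in `[0, 1]` by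
`C (2r) ^ t`, and a centred packing of `[0, 1]` by `r`-balls has at most `1 / r` balls, so
`M_r^q ≤ C' r ^ (t q - 1)` and `τ q ≥ t q - 1`; letting `q → ∞` shows that no Frostman exponent
exceeds a `t'` with `τ < t' q`. Conversely `τ q > w q` forces `M_r^q ≤ r ^ (w q)`, hence
`ν (B(x, r)) ≤ r ^ w`, for all small `r`, which is a Frostman bound with exponent `w`.
Finally, by pigeonhole some `r`-ball carries mass `≳ r`, so `τ q ≤ 2 q` and the infimum is taken
over a nonempty set.
-/

open Metric Set

section Support

variable {ν : Measure ℝ}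

lemma mSupp_subset_of_measure_compl_eq_zero {S : Set ℝ} (hS : IsClosed S) (h : ν Sᶜ = 0) :
    mSupp ν ⊆ S := by
  intro x hx
  by_contra hxS
  obtain ⟨r, hr, hball⟩ := Metric.isOpen_iff.1 hS.isOpen_compl x hxS
  exact (hx r hr).ne' (measure_mono_null hball h)

lemma measure_compl_mSupp (ν : Measure ℝ) : ν (mSupp ν)ᶜ = 0 := by
  refine measure_null_of_locally_null _ fun x hx => ?_
  obtain ⟨r, hr, hxr⟩ : ∃ r, 0 < r ∧ ν (ball x r) = 0 := by
    simpa [mSupp, pos_iff_ne_zero] using hx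
  exact ⟨ball x r, mem_nhdsWithin_of_mem_nhds (ball_mem_nhds x hr), hxr⟩

lemma inter_mSupp_nonempty {A : Set ℝ} (hA : ν A ≠ 0) : (A ∩ mSupp ν).Nonempty := by
  by_contra hempty
  have hsub : A ⊆ (mSupp ν)ᶜ :=
    (disjoint_iff_inter_eq_empty.2 (not_nonempty_iff_eq_empty.1 hempty)).subset_compl_right
  exact hA (measure_mono_null hsub (measure_compl_mSupp ν))

end Support

lemma card_mul_le_one_of_pairwise_disjoint_ball {P : Finset ℝ} {r : ℝ} (hr : 0 ≤ r)
    (hr' : r ≤ 1 / 2) (hP : ↑P ⊆ Icc (0 : ℝ) 1)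
    (hd : (↑P : Set ℝ).Pairwise fun x y => Disjoint (ball x r) (ball y r)) :
    (P.card : ℝ) * r ≤ 1 := by
  have hunion : (⋃ x ∈ P, ball x r) ⊆ ball (1 / 2) (1 / 2 + r) := by
    simp only [iUnion_subset_iff]
    intro x hx y hy
    have hx01 := hP hx
    rw [mem_ball, Real.dist_eq, abs_lt] at hy ⊢
    constructor <;> linarith [hx01.1, hx01.2]
  have hvol : (P.card : ℝ≥0∞) * ENNReal.ofReal (2 * r) ≤ ENNReal.ofReal (2 * (1 / 2 + r)) := by
    calc (P.card : ℝ≥0∞) * ENNReal.ofReal (2 * r)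
        = volume (⋃ x ∈ P, ball x r) := by
          rw [measure_biUnion_finset hd fun _ _ => measurableSet_ball]
          simp [Real.volume_ball]
      _ ≤ ENNReal.ofReal (2 * (1 / 2 + r)) := by
          rw [← Real.volume_ball (1 / 2)]
          exact measure_mono hunion
  rw [← ENNReal.ofReal_natCast, ← ENNReal.ofReal_mul (by positivity),
    ENNReal.ofReal_le_ofReal_iff (by positivity)] at hvol
  nlinarith

section Packing

variable {ν : Measure ℝ} {q r : ℝ}

lemma measure_ball_rpow_le_Mrq {x : ℝ} (hx : x ∈ mSupp ν) : ν (ball x r) ^ q ≤ Mrq ν q r :=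
  le_sSup ⟨{x}, by simpa using hx, by simp, by simp⟩

lemma Mrq_le_ofReal (hsupp : mSupp ν ⊆ Icc 0 1) (hq : 0 ≤ q) (hr : 0 < r) (hr' : r ≤ 1 / 2)
    {B : ℝ} (hB : 0 ≤ B) (hball : ∀ x ∈ mSupp ν, ν (ball x r) ≤ ENNReal.ofReal B) :
    Mrq ν q r ≤ ENNReal.ofReal (B ^ q / r) := by
  refine sSup_le ?_
  rintro _ ⟨P, hPs, hPd, rfl⟩
  have hcard : (P.card : ℝ) ≤ 1 / r := by
    rw [le_div_iff₀ hr]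
    exact card_mul_le_one_of_pairwise_disjoint_ball hr.le hr' (hPs.trans hsupp) hPd
  calc ∑ x ∈ P, ν (ball x r) ^ q
      ≤ P.card • ENNReal.ofReal (B ^ q) := by
        refine Finset.sum_le_card_nsmul _ _ _ fun x hx => ?_
        rw [← ENNReal.ofReal_rpow_of_nonneg hB hq]
        exact ENNReal.rpow_le_rpow (hball x (hPs hx)) hq
    _ = ENNReal.ofReal (P.card * B ^ q) := by
        rw [nsmul_eq_mul, ENNReal.ofReal_mul (by positivity), ENNReal.ofReal_natCast]
    _ ≤ ENNReal.ofReal (B ^ q / r) := by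
        rw [div_eq_mul_one_div, mul_comm (B ^ q)]
        gcongr

lemma Mrq_ne_top [IsProbabilityMeasure ν] (hsupp : mSupp ν ⊆ Icc 0 1) (hq : 0 ≤ q) (hr : 0 < r)
    (hr' : r ≤ 1 / 2) : Mrq ν q r ≠ ∞ :=
  ne_top_of_le_ne_top ENNReal.ofReal_ne_top <|
    Mrq_le_ofReal hsupp hq hr hr' zero_le_one fun _ _ => by simpa using prob_le_one

lemma Mrq_pos [IsFiniteMeasure ν] [NeZero ν] (hr : 0 < r) : 0 < Mrq ν q r := by
  obtain ⟨x, -, hx⟩ := inter_mSupp_nonempty (ν := ν) (A := univ)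
    (Measure.measure_univ_ne_zero.2 (NeZero.ne ν))
  exact (ENNReal.rpow_pos (hx r hr) (measure_ne_top ν _)).trans_le (measure_ball_rpow_le_Mrq hx)

lemma Mrq_toReal_pos [IsProbabilityMeasure ν] (hsupp : mSupp ν ⊆ Icc 0 1) (hq : 0 ≤ q)
    (hr : 0 < r) (hr' : r ≤ 1 / 2) : 0 < (Mrq ν q r).toReal :=
  ENNReal.toReal_pos (Mrq_pos hr).ne' (Mrq_ne_top hsupp hq hr hr')

end Packing

section LogRatio

variable {f : ℝ → ℝ} {τ a : ℝ}

lemma eventually_pos_and_log_neg_nhdsGT : ∀ᶠ r in 𝓝[>] (0 : ℝ), 0 < r ∧ Real.log r < 0 := by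
  filter_upwards [Ioo_mem_nhdsGT (zero_lt_one' ℝ)] with r hr
  exact ⟨hr.1, Real.log_neg hr.1 hr.2⟩

lemma le_of_tendsto_log_div_log_of_rpow_le
    (hf : Tendsto (fun r => Real.log (f r) / Real.log r) (𝓝[>] 0) (𝓝 τ))
    (h : ∀ᶠ r in 𝓝[>] 0, r ^ a ≤ f r) : τ ≤ a := by
  refine le_of_tendsto hf ?_
  filter_upwards [h, eventually_pos_and_log_neg_nhdsGT] with r hle ⟨hr, hlog⟩
  rw [div_le_iff_of_neg hlog, ← Real.log_rpow hr]
  exact Real.log_le_log (Real.rpow_pos_of_pos hr a) hle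

lemma le_of_tendsto_log_div_log_of_le_mul_rpow
    (hf : Tendsto (fun r => Real.log (f r) / Real.log r) (𝓝[>] 0) (𝓝 τ)) {K : ℝ} (hK : 0 < K)
    (h : ∀ᶠ r in 𝓝[>] 0, 0 < f r ∧ f r ≤ K * r ^ a) : a ≤ τ := by
  have hlim : Tendsto (fun r => a + Real.log K / Real.log r) (𝓝[>] 0) (𝓝 a) := by
    simpa using (tendsto_const_nhds.div_atBot Real.tendsto_log_nhdsGT_zero).const_add a
  refine le_of_tendsto_of_tendsto hlim hf ?_
  filter_upwards [h, eventually_pos_and_log_neg_nhdsGT] with r ⟨hpos, hle⟩ ⟨hr, hlog⟩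
  have hlogf : Real.log (f r) ≤ Real.log K + a * Real.log r := by
    rw [← Real.log_rpow hr, ← Real.log_mul hK.ne' (Real.rpow_pos_of_pos hr a).ne']
    exact Real.log_le_log hpos hle
  rw [le_div_iff_of_neg hlog, add_mul, div_mul_cancel₀ _ hlog.ne]
  linarith

lemma eventually_le_rpow_of_lt_of_tendsto_log_div_log
    (hf : Tendsto (fun r => Real.log (f r) / Real.log r) (𝓝[>] 0) (𝓝 τ)) (ha : a < τ) :
    ∀ᶠ r in 𝓝[>] 0, f r ≤ r ^ a := by
  filter_upwards [hf.eventually_const_lt ha, eventually_pos_and_log_neg_nhdsGT]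
    with r hlt ⟨hr, hlog⟩
  rcases le_or_gt (f r) 0 with hf0 | hf0
  · exact hf0.trans (Real.rpow_pos_of_pos hr a).le
  rw [lt_div_iff_of_neg hlog, ← Real.log_rpow hr] at hlt
  exact (Real.log_lt_log_iff hf0 (Real.rpow_pos_of_pos hr a)).1 hlt |>.le

end LogRatio

def HasFrostmanBound (ν : Measure ℝ) (t C : ℝ) : Prop :=
  ∀ a b : ℝ, 0 ≤ a → a ≤ b → b ≤ 1 → ν (Icc a b) ≤ ENNReal.ofReal (C * (b - a) ^ t)

section Frostman

variable {ν : Measure ℝ} {t C q τq : ℝ}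

lemma HasFrostmanBound.measure_ball_le (h : HasFrostmanBound ν t C)
    (hsupp : ν (Icc (0 : ℝ) 1)ᶜ = 0) (ht : 0 ≤ t) (hC : 0 ≤ C) {x r : ℝ} (hx : x ∈ Icc (0 : ℝ) 1)
    (hr : 0 ≤ r) : ν (ball x r) ≤ ENNReal.ofReal (C * (2 * r) ^ t) := by
  have hsub : ball x r ∩ Icc 0 1 ⊆ Icc (max (x - r) 0) (min (x + r) 1) := by
    rintro y ⟨hy, hy0, hy1⟩
    rw [mem_ball, Real.dist_eq, abs_lt] at hy
    exact ⟨max_le (by linarith) hy0, le_min (by linarith) hy1⟩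
  have hle : max (x - r) 0 ≤ min (x + r) 1 :=
    max_le (le_min (by linarith) (by linarith [hx.2])) (le_min (by linarith [hx.1]) zero_le_one)
  calc ν (ball x r) = ν (ball x r ∩ Icc 0 1) := (measure_inter_conull hsupp).symm
    _ ≤ ν (Icc (max (x - r) 0) (min (x + r) 1)) := measure_mono hsub
    _ ≤ ENNReal.ofReal (C * (min (x + r) 1 - max (x - r) 0) ^ t) :=
        h _ _ (le_max_right _ _) hle (min_le_right _ _)
    _ ≤ ENNReal.ofReal (C * (2 * r) ^ t) := by
        gcongr
        linarith [le_max_left (x - r) 0, min_le_left (x + r) 1]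

lemma HasFrostmanBound.mul_sub_one_le [IsProbabilityMeasure ν] (h : HasFrostmanBound ν t C)
    (hsupp : ν (Icc (0 : ℝ) 1)ᶜ = 0) (ht : 0 ≤ t) (hC : 0 < C) (hq : 0 < q)
    (hτ : Tendsto (fun r => Real.log (Mrq ν q r).toReal / Real.log r) (𝓝[>] 0) (𝓝 τq)) :
    t * q - 1 ≤ τq := by
  have hS := mSupp_subset_of_measure_compl_eq_zero isClosed_Icc hsupp
  refine le_of_tendsto_log_div_log_of_le_mul_rpow hτ (K := C ^ q * 2 ^ (t * q)) (by positivity) ?_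
  filter_upwards [Ioc_mem_nhdsGT (show (0 : ℝ) < 1 / 2 by norm_num)] with r ⟨hr, hr'⟩
  refine ⟨Mrq_toReal_pos hS hq.le hr hr', ENNReal.toReal_le_of_le_ofReal (by positivity) ?_⟩
  calc Mrq ν q r ≤ ENNReal.ofReal ((C * (2 * r) ^ t) ^ q / r) :=
        Mrq_le_ofReal hS hq.le hr hr' (by positivity)
          fun x hx => h.measure_ball_le hsupp ht hC.le (hS hx) hr.le
    _ = ENNReal.ofReal (C ^ q * 2 ^ (t * q) * r ^ (t * q - 1)) := by
        rw [Real.mul_rpow hC.le (by positivity), ← Real.rpow_mul (by positivity),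
          Real.mul_rpow zero_le_two hr.le, Real.rpow_sub hr, Real.rpow_one]
        ring_nf

lemma hasFrostmanBound_of_measure_ball_le [IsProbabilityMeasure ν] {w ε : ℝ} (hw : 0 ≤ w)
    (hε : 0 < ε) (h : ∀ r, 0 < r → r < ε → ∀ x ∈ mSupp ν, ν (ball x r) ≤ ENNReal.ofReal (r ^ w)) :
    HasFrostmanBound ν w (1 + (ε ^ w)⁻¹) := by
  intro a b ha hab hb
  have hℓ : 0 ≤ b - a := sub_nonneg.2 hab
  rw [ENNReal.le_ofReal_iff_toReal_le (measure_ne_top ν _) (by positivity)]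
  rcases lt_or_ge (b - a) ε with hsmall | hlarge
  · rcases eq_or_ne (ν (Icc a b)) 0 with h0 | h0
    · rw [h0, ENNReal.toReal_zero]
      positivity
    obtain ⟨x, hxI, hx⟩ := inter_mSupp_nonempty h0
    -- `Icc a b` lies in every ball of radius `ρ > b - a` about `x`; letting `ρ ↓ b - a`
    -- also covers `a = b`.
    have hlim : ∀ᶠ ρ in 𝓝[>] (b - a), (ν (Icc a b)).toReal ≤ ρ ^ w := by
      filter_upwards [Ioo_mem_nhdsGT hsmall] with ρ ⟨hρ, hρε⟩
      have hsub : Icc a b ⊆ ball x ρ := fun y hy =>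
        mem_ball.2 ((Real.dist_le_of_mem_Icc hy hxI).trans_lt hρ)
      exact ENNReal.toReal_le_of_le_ofReal (Real.rpow_nonneg (hℓ.trans hρ.le) w)
        ((measure_mono hsub).trans (h ρ (hℓ.trans_lt hρ) hρε x hx))
    have hcont : Tendsto (fun ρ : ℝ => ρ ^ w) (𝓝[>] (b - a)) (𝓝 ((b - a) ^ w)) :=
      (Real.continuousAt_rpow_const _ _ (Or.inr hw)).tendsto.mono_left nhdsWithin_le_nhds
    calc (ν (Icc a b)).toReal ≤ (b - a) ^ w := ge_of_tendsto hcont hlim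
      _ ≤ (1 + (ε ^ w)⁻¹) * (b - a) ^ w := le_mul_of_one_le_left (by positivity)
          (le_add_of_nonneg_right (by positivity))
  · calc (ν (Icc a b)).toReal ≤ 1 := ENNReal.toReal_le_of_le_ofReal zero_le_one
          (by simpa using prob_le_one)
      _ ≤ (ε ^ w)⁻¹ * (b - a) ^ w := by
          rw [← div_eq_inv_mul, le_div_iff₀ (by positivity), one_mul]
          exact Real.rpow_le_rpow hε.le hlarge hw
      _ ≤ (1 + (ε ^ w)⁻¹) * (b - a) ^ w := by gcongr; linarith

lemma exists_hasFrostmanBound_of_mul_lt [IsProbabilityMeasure ν] (hsupp : mSupp ν ⊆ Icc 0 1)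
    {w : ℝ} (hw : 0 ≤ w) (hq : 0 < q) (hlt : w * q < τq)
    (hτ : Tendsto (fun r => Real.log (Mrq ν q r).toReal / Real.log r) (𝓝[>] 0) (𝓝 τq)) :
    ∃ C, 0 < C ∧ HasFrostmanBound ν w C := by
  obtain ⟨ε, hε : 0 < ε, hsub⟩ := mem_nhdsGT_iff_exists_Ioo_subset.1
    ((eventually_le_rpow_of_lt_of_tendsto_log_div_log hτ hlt).and
      (Ioc_mem_nhdsGT (show (0 : ℝ) < 1 / 2 by norm_num)))
  refine ⟨1 + (ε ^ w)⁻¹, by positivity,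
    hasFrostmanBound_of_measure_ball_le hw hε fun r hr hrε x hx => ?_⟩
  obtain ⟨hM, -, hr'⟩ := hsub ⟨hr, hrε⟩
  have hM' : Mrq ν q r ≤ ENNReal.ofReal (r ^ w) ^ q := by
    rw [ENNReal.ofReal_rpow_of_nonneg (by positivity) hq.le, ← Real.rpow_mul hr.le]
    exact (ENNReal.le_ofReal_iff_toReal_le (Mrq_ne_top hsupp hq.le hr hr') (by positivity)).2 hM
  exact (ENNReal.rpow_le_rpow_iff hq).1 ((measure_ball_rpow_le_Mrq hx).trans hM')

end Frostman

section Pigeonhole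

variable {ν : Measure ℝ} [IsProbabilityMeasure ν] {q r : ℝ}

lemma exists_mem_mSupp_ofReal_le_measure_ball (hsupp : ν (Icc (0 : ℝ) 1)ᶜ = 0) (hr : 0 < r)
    (hr1 : r ≤ 1) : ∃ x ∈ mSupp ν, ENNReal.ofReal (r / 2) ≤ ν (ball x (2 * r)) := by
  set N := ⌊1 / r⌋₊ + 1
  have hcov : Icc 0 1 ⊆ ⋃ k ∈ Finset.range N, ball (k * r) r := by
    intro y hy
    have hyr : 0 ≤ y / r := div_nonneg hy.1 hr.le
    refine mem_biUnion (x := ⌊y / r⌋₊) ?_ ?_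
    · exact Finset.mem_range.2 (Nat.lt_succ_of_le
        (Nat.floor_le_floor (div_le_div_of_nonneg_right hy.2 hr.le)))
    · have h1 := (le_div_iff₀ hr).1 (Nat.floor_le hyr)
      have h2 := (div_lt_iff₀ hr).1 (Nat.lt_floor_add_one (y / r))
      rw [mem_ball, Real.dist_eq, abs_lt]
      constructor <;> nlinarith
  have hsum : ∑ _k ∈ Finset.range N, (N : ℝ≥0∞)⁻¹ ≤ ∑ k ∈ Finset.range N, ν (ball (k * r) r) :=
    calc ∑ _k ∈ Finset.range N, (N : ℝ≥0∞)⁻¹ = 1 := by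
          rw [Finset.sum_const, Finset.card_range, nsmul_eq_mul,
            ENNReal.mul_inv_cancel (by simp [N]) (ENNReal.natCast_ne_top N)]
      _ = ν (Icc 0 1) := ((prob_compl_eq_zero_iff measurableSet_Icc).1 hsupp).symm
      _ ≤ ∑ k ∈ Finset.range N, ν (ball (k * r) r) :=
          (measure_mono hcov).trans (measure_biUnion_finset_le _ _)
  obtain ⟨k, -, hk⟩ := ENNReal.exists_le_of_sum_le ⟨0, by simp [N]⟩ hsum
  obtain ⟨x, hxk, hx⟩ := inter_mSupp_nonempty
    ((ENNReal.inv_pos.2 (ENNReal.natCast_ne_top N)).trans_le hk).ne'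
  refine ⟨x, hx, le_trans ?_ (hk.trans (measure_mono fun y hy => ?_))⟩
  · have hN : (N : ℝ) ≤ 2 / r := by
      have := Nat.floor_le (one_div_pos.2 hr).le
      have : 1 ≤ 1 / r := by rwa [le_div_iff₀ hr, one_mul]
      simp only [N, Nat.cast_add, Nat.cast_one]
      linarith [show 2 / r = 1 / r + 1 / r by ring]
    rw [← ENNReal.ofReal_natCast, ← ENNReal.ofReal_inv_of_pos (by positivity)]
    refine ENNReal.ofReal_le_ofReal ?_
    rw [le_inv_comm₀ (by positivity) (by positivity)]
    simpa [div_div_eq_mul_div] using hN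
  · rw [mem_ball] at hy hxk ⊢
    linarith [dist_triangle_right y x (k * r)]

lemma rpow_two_mul_le_Mrq_toReal (hsupp : ν (Icc (0 : ℝ) 1)ᶜ = 0) (hq : 0 ≤ q) (hr : 0 < r)
    (hr' : r ≤ 1 / 4) : r ^ (2 * q) ≤ (Mrq ν q r).toReal := by
  obtain ⟨x, hx, hball⟩ := exists_mem_mSupp_ofReal_le_measure_ball hsupp (half_pos hr)
    (by linarith)
  rw [mul_div_cancel₀ r two_ne_zero] at hball
  have hsq : ENNReal.ofReal (r ^ (2 : ℝ)) ≤ ENNReal.ofReal (r / 2 / 2) :=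
    ENNReal.ofReal_le_ofReal (by rw [Real.rpow_two]; nlinarith)
  refine ENNReal.ofReal_le_iff_le_toReal (Mrq_ne_top
    (mSupp_subset_of_measure_compl_eq_zero isClosed_Icc hsupp) hq hr (by linarith)) |>.1 ?_
  calc ENNReal.ofReal (r ^ (2 * q)) = ENNReal.ofReal (r ^ (2 : ℝ)) ^ q := by
        rw [ENNReal.ofReal_rpow_of_nonneg (by positivity) hq, Real.rpow_mul hr.le]
    _ ≤ ν (ball x r) ^ q := ENNReal.rpow_le_rpow (hsq.trans hball) hq
    _ ≤ Mrq ν q r := measure_ball_rpow_le_Mrq hx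

lemma le_two_mul_of_tendsto_log_Mrq (hsupp : ν (Icc (0 : ℝ) 1)ᶜ = 0) (hq : 0 ≤ q) {τq : ℝ}
    (hτ : Tendsto (fun r => Real.log (Mrq ν q r).toReal / Real.log r) (𝓝[>] 0) (𝓝 τq)) :
    τq ≤ 2 * q := by
  refine le_of_tendsto_log_div_log_of_rpow_le hτ ?_
  filter_upwards [Ioc_mem_nhdsGT (show (0 : ℝ) < 1 / 4 by norm_num)] with r ⟨hr, hr'⟩
  exact rpow_two_mul_le_Mrq_toReal hsupp hq hr hr'

end Pigeonhole

theorem stmt2 (ν : Measure ℝ) [IsProbabilityMeasure ν] (hsupp : ν (Set.Icc (0:ℝ) 1)ᶜ = 0)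
    (τ : ℝ → ℝ)
    (hτ : ∀ q : ℝ, 0 < q →
      Tendsto (fun r : ℝ => Real.log (Mrq ν q r).toReal / Real.log r) (𝓝[>] 0) (𝓝 (τ q))) :
    frostmanExp01 ν = sInf {t : ℝ | 0 ≤ t ∧ ∀ q : ℝ, 0 < q → τ q < t * q} := by
  set F := {t : ℝ | 0 ≤ t ∧ ∃ C, 0 < C ∧ HasFrostmanBound ν t C}
  set T := {t : ℝ | 0 ≤ t ∧ ∀ q : ℝ, 0 < q → τ q < t * q}
  have hF0 : 0 ∈ F := ⟨le_rfl, 1, one_pos, fun a b _ _ _ => by simpa using prob_le_one⟩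
  have hT3 : 3 ∈ T := ⟨by norm_num, fun q hq => by
    linarith [le_two_mul_of_tendsto_log_Mrq hsupp hq.le (hτ q hq)]⟩
  have hFT : ∀ t ∈ F, ∀ t' ∈ T, t ≤ t' := by
    rintro t ⟨ht, C, hC, hFC⟩ t' ⟨-, ht'⟩
    by_contra! hlt
    have hq : 0 < 1 / (t - t') := one_div_pos.2 (sub_pos.2 hlt)
    have heq : t * (1 / (t - t')) - 1 = t' * (1 / (t - t')) := by
      field_simp [(sub_pos.2 hlt).ne']
      ring
    exact ((hFC.mul_sub_one_le hsupp ht hC hq (hτ _ hq)).trans_lt (ht' _ hq)).ne heq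
  have hFbdd : BddAbove F := ⟨3, fun t ht => hFT t ht 3 hT3⟩
  have hs0 : 0 ≤ sSup F := le_csSup hFbdd hF0
  have hT : ∀ ε > 0, sSup F + ε ∈ T := by
    refine fun ε hε => ⟨by positivity, fun q hq => ?_⟩
    by_contra! hle
    obtain ⟨C, hC, hFC⟩ := exists_hasFrostmanBound_of_mul_lt
      (mSupp_subset_of_measure_compl_eq_zero isClosed_Icc hsupp) (w := sSup F + ε / 2)
      (by positivity) hq (by nlinarith) (hτ q hq)
    linarith [le_csSup hFbdd ⟨by positivity, C, hC, hFC⟩]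
  refine le_antisymm (le_csInf ⟨3, hT3⟩ fun t' ht' => csSup_le ⟨0, hF0⟩ fun t ht => hFT t ht t' ht')
    (le_of_forall_pos_le_add fun ε hε => csInf_le ⟨0, fun t ht => ht.1⟩ (hT ε hε))
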